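/- Let $\mathbb{V}$ be a real Hilbert space, $\mathbb{V}_1,\dots,\mathbb{V}_n$ closed subspaces with $\mathbb{V}=\overline{\mathbb{V}_1+\cdots+\mathbb{V}_n}$, and let $\mathcal{P}_i$ be the orthogonal projection onto $\mathbb{V}_i$. Given $u^0\in\mathbb{V}$, define the sequence $u^{l}=\mathcal{P}_i(u^{l-1})$ where $l\equiv i \pmod n$, $i\in\{1,\dots,n\}$. Then the sequence $(u^l)$ converges in $\mathbb{V}$. -/

import Mathlib

open Filter

/-- If `x ∈ K` and `y ∈ Kᗮ` then `‖x‖ ≤ ‖x + y‖`. -/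
lemma norm_le_norm_add_of_orthogonal {H : Type*} [NormedAddCommGroup H]
    [InnerProductSpace ℝ H] (K : Submodule ℝ H) {x y : H}
    (hx : x ∈ K) (hy : y ∈ Kᗮ) : ‖x‖ ≤ ‖x + y‖ := by
  have horth : (inner ℝ x y : ℝ) = 0 := hy x hx
  have h2 : ‖x + y‖ ^ 2 = ‖x‖ ^ 2 + ‖y‖ ^ 2 := by
    rw [norm_add_sq_real, horth]; ring
  have : ‖x‖ ^ 2 ≤ ‖x + y‖ ^ 2 := by nlinarith [sq_nonneg ‖y‖]
  exact le_of_pow_le_pow_left₀ two_ne_zero (norm_nonneg _) this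

/-- Lions' theorem: cyclically applying the orthogonal projections onto closed subspaces
whose sum is dense yields a convergent sequence. -/
theorem lions_cyclic_projections_converge
    {H : Type*} [NormedAddCommGroup H] [InnerProductSpace ℝ H] [CompleteSpace H]
    (n : ℕ) (hn : 0 < n)
    (V : Fin n → Submodule ℝ H)
    (hclosed : ∀ i, IsClosed ((V i : Set H)))
    (hdense : (⨆ i, V i).topologicalClosure = ⊤)
    (u : ℕ → H)
    -- `u (l+1)` is the orthogonal projection of `u l` onto `V i` where `i = l % n`
    (hrec : ∀ l : ℕ,
      u (l + 1) ∈ V ⟨l % n, Nat.mod_lt l hn⟩ ∧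
      u l - u (l + 1) ∈ (V ⟨l % n, Nat.mod_lt l hn⟩)ᗮ) :
    ∃ w : H, Tendsto u atTop (nhds w) := by
  set b : ℕ → ℝ := fun l => ‖u l‖ with hbdef
  set e : ℕ → ℝ := fun l => ‖u l - u (l + 1)‖ with hedef
  have hb0 : ∀ l, 0 ≤ b l := fun l => norm_nonneg _
  have he0 : ∀ l, 0 ≤ e l := fun l => norm_nonneg _
  -- Pythagoras at each step
  have hpyth : ∀ l, b l ^ 2 = b (l + 1) ^ 2 + e l ^ 2 := by
    intro l
    have horth : (inner ℝ (u (l + 1)) (u l - u (l + 1)) : ℝ) = 0 :=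
      (hrec l).2 _ (hrec l).1
    have hsplit : u l = u (l + 1) + (u l - u (l + 1)) := by abel
    have : b l = ‖u (l + 1) + (u l - u (l + 1))‖ := by rw [hbdef, ← hsplit]
    rw [this, norm_add_sq_real, horth]
    ring
  -- norms are nonincreasing
  have hanti : Antitone b := by
    apply antitone_nat_of_succ_le
    intro l
    have := hpyth l
    have h2 : b (l + 1) ^ 2 ≤ b l ^ 2 := by nlinarith [sq_nonneg (e l)]
    exact le_of_pow_le_pow_left₀ two_ne_zero (hb0 l) h2
  have hbdd : BddBelow (Set.range b) := ⟨0, by rintro x ⟨l, rfl⟩; exact hb0 l⟩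
  set L : ℝ := ⨅ l, b l with hLdef
  have hbL : Tendsto b atTop (nhds L) := tendsto_atTop_ciInf hanti hbdd
  have hL0 : 0 ≤ L := le_ciInf hb0
  have hb2 : Tendsto (fun l => b l ^ 2) atTop (nhds (L ^ 2)) := hbL.pow 2
  -- increments tend to zero
  have he : Tendsto e atTop (nhds 0) := by
    have he2 : Tendsto (fun l => e l ^ 2) atTop (nhds 0) := by
      have h1 : Tendsto (fun l => b l ^ 2 - b (l + 1) ^ 2) atTop (nhds (L ^ 2 - L ^ 2)) :=
        hb2.sub (hb2.comp (tendsto_add_atTop_nat 1))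
      simp only [sub_self] at h1
      convert h1 using 2 with l
      have := hpyth l
      linarith
    have h3 : Tendsto (fun l => Real.sqrt (e l ^ 2)) atTop (nhds (Real.sqrt 0)) :=
      (Real.continuous_sqrt.tendsto 0).comp he2
    simpa [Real.sqrt_sq (he0 _), Real.sqrt_zero] using h3
  -- one simultaneous projection step does not increase the norm of the sum
  have hstep : ∀ k m : ℕ, k % n = m % n → ‖u (k + 1) + u (m + 1)‖ ≤ ‖u k + u m‖ := by
    intro k m h
    have hfin : (⟨m % n, Nat.mod_lt m hn⟩ : Fin n) = ⟨k % n, Nat.mod_lt k hn⟩ :=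
      Fin.ext h.symm
    have hx : u (k + 1) + u (m + 1) ∈ V ⟨k % n, Nat.mod_lt k hn⟩ := by
      apply Submodule.add_mem _ (hrec k).1
      have := (hrec m).1
      rwa [hfin] at this
    have hy : (u k - u (k + 1)) + (u m - u (m + 1)) ∈ (V ⟨k % n, Nat.mod_lt k hn⟩)ᗮ := by
      apply Submodule.add_mem _ (hrec k).2
      have := (hrec m).2
      rwa [hfin] at this
    have hsum : u k + u m = (u (k + 1) + u (m + 1)) + ((u k - u (k + 1)) + (u m - u (m + 1))) := by
      abel
    rw [hsum]
    exact norm_le_norm_add_of_orthogonal _ hx hy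
  -- iterate the step
  have hstep_iter : ∀ p k m : ℕ, k % n = m % n →
      ‖u (k + p) + u (m + p)‖ ≤ ‖u k + u m‖ := by
    intro p
    induction p with
    | zero => intro k m _; simp
    | succ q ih =>
      intro k m h
      have h1 : (k + q) % n = (m + q) % n := by
        rw [Nat.add_mod, h, ← Nat.add_mod]
      have h2 : ‖u (k + q + 1) + u (m + q + 1)‖ ≤ ‖u (k + q) + u (m + q)‖ := hstep _ _ h1
      have h3 : ‖u (k + q) + u (m + q)‖ ≤ ‖u k + u m‖ := ih k m h
      calc ‖u (k + (q + 1)) + u (m + (q + 1))‖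
          = ‖u (k + q + 1) + u (m + q + 1)‖ := rfl
        _ ≤ ‖u (k + q) + u (m + q)‖ := h2
        _ ≤ ‖u k + u m‖ := h3
  -- telescoping estimate
  have htel : ∀ j g : ℕ, ‖u j - u (j + g)‖ ≤ ∑ i ∈ Finset.range g, e (j + i) := by
    intro j g
    have h := dist_le_range_sum_dist (fun i => u (j + i)) g
    simp only [Nat.add_zero] at h
    calc ‖u j - u (j + g)‖ = dist (u j) (u (j + g)) := (dist_eq_norm _ _).symm
      _ ≤ ∑ i ∈ Finset.range g, dist (u (j + i)) (u (j + (i + 1))) := h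
      _ = ∑ i ∈ Finset.range g, e (j + i) := by
          apply Finset.sum_congr rfl
          intro i _
          rw [dist_eq_norm]
          rfl
  -- lower bound for sums of iterates with congruent indices
  have hlow : ∀ k m : ℕ, k % n = m % n → k ≤ m → 2 * L ≤ ‖u k + u m‖ := by
    intro k m h hkm
    set g := m - k with hgdef
    have hmk : m = k + g := by omega
    -- for every p, 2 * b (m+p) - (sum of increments) ≤ ‖u k + u m‖
    have hp : ∀ p, 2 * b (m + p) - ∑ i ∈ Finset.range g, e (k + p + i) ≤ ‖u k + u m‖ := by
      intro p
      have h1 : ‖u (k + p) + u (m + p)‖ ≤ ‖u k + u m‖ := hstep_iter p k m h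
      have h2 : ‖u (k + p) - u (m + p)‖ ≤ ∑ i ∈ Finset.range g, e (k + p + i) := by
        have := htel (k + p) g
        have he : k + p + g = m + p := by omega
        rwa [he] at this
      have h3 : 2 * b (m + p) - ‖u (k + p) - u (m + p)‖ ≤ ‖u (k + p) + u (m + p)‖ := by
        have hid : u (k + p) + u (m + p) = (2 : ℝ) • u (m + p) + (u (k + p) - u (m + p)) := by
          rw [two_smul]; abel
        have := norm_sub_norm_le ((2 : ℝ) • u (m + p)) (-(u (k + p) - u (m + p)))
        simp only [sub_neg_eq_add, norm_neg] at this
        have hsm : ‖(2 : ℝ) • u (m + p)‖ = 2 * b (m + p) := by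
          rw [norm_smul]; simp [hbdef]
        rw [hid]
        calc 2 * b (m + p) - ‖u (k + p) - u (m + p)‖
            = ‖(2:ℝ) • u (m + p)‖ - ‖u (k + p) - u (m + p)‖ := by rw [hsm]
          _ ≤ ‖(2:ℝ) • u (m + p) + (u (k + p) - u (m + p))‖ := this
      linarith
    -- pass to the limit in p
    have hlim : Tendsto (fun p => 2 * b (m + p) - ∑ i ∈ Finset.range g, e (k + p + i))
        atTop (nhds (2 * L - 0)) := by
      apply Tendsto.sub
      · have h1 : Tendsto (fun p => b (m + p)) atTop (nhds L) := by
          apply hbL.comp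
          apply tendsto_atTop_mono (fun p => Nat.le_add_left p m) tendsto_id
        exact h1.const_mul 2 |>.congr (fun p => by ring)
      · have : ∀ i ∈ Finset.range g, Tendsto (fun p => e (k + p + i)) atTop (nhds 0) := by
          intro i _
          apply he.comp
          apply tendsto_atTop_mono (fun p => by omega : ∀ p, p ≤ k + p + i) tendsto_id
        have hsum := tendsto_finset_sum (Finset.range g) this
        simpa using hsum
    rw [sub_zero] at hlim
    exact le_of_tendsto hlim (Filter.Eventually.of_forall hp)
  -- the sequence is Cauchy
  have hcauchy : CauchySeq u := by
    rw [Metric.cauchySeq_iff]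
    intro δ hδ
    -- choose thresholds
    have hδ4 : (0 : ℝ) < δ / 4 := by linarith
    have hδ4n : (0 : ℝ) < δ / (4 * n) := by positivity
    obtain ⟨N₁, hN₁⟩ := (Metric.tendsto_atTop.mp he) (δ / (4 * n)) hδ4n
    obtain ⟨N₂, hN₂⟩ := (Metric.tendsto_atTop.mp hb2) ((δ / 4) ^ 2) (by positivity)
    set N := max N₁ N₂ with hNdef
    refine ⟨N, ?_⟩
    have key : ∀ k m, N ≤ k → N ≤ m → k ≤ m → dist (u k) (u m) < δ := by
      intro k m hk hm hkm
      set k' := k + (m - k) % n with hk'def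
      have hk'm : k' % n = m % n := by
        rw [hk'def, Nat.add_mod_mod, Nat.add_sub_cancel' hkm]
      have hk'le : k' ≤ m := by
        have : (m - k) % n ≤ m - k := Nat.mod_le _ _
        omega
      have hk'N : N ≤ k' := le_trans hk (by omega)
      -- first piece: from k to k'
      have hpiece1 : dist (u k) (u k') ≤ δ / 4 := by
        have h1 : ‖u k - u k'‖ ≤ ∑ i ∈ Finset.range ((m - k) % n), e (k + i) := htel k _
        have hterm : ∀ i ∈ Finset.range ((m - k) % n), e (k + i) ≤ δ / (4 * n) := by
          intro i _
          have hki : N₁ ≤ k + i := le_trans (le_trans (le_max_left _ _) hk) (Nat.le_add_right _ _)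
          have := hN₁ (k + i) hki
          rw [Real.dist_eq, sub_zero, abs_of_nonneg (he0 _)] at this
          exact le_of_lt this
        have h2 := Finset.sum_le_card_nsmul (Finset.range ((m - k) % n))
          (fun i => e (k + i)) (δ / (4 * n)) hterm
        simp only [Finset.card_range, nsmul_eq_mul] at h2
        have h3 : (((m - k) % n : ℕ) : ℝ) * (δ / (4 * n)) ≤ δ / 4 := by
          have hmod : (((m - k) % n : ℕ) : ℝ) ≤ (n : ℝ) :=
            Nat.cast_le.mpr (le_of_lt (Nat.mod_lt _ hn))
          have hn' : (0 : ℝ) < n := by exact_mod_cast hn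
          rw [div_mul_eq_div_div]
          calc (((m - k) % n : ℕ) : ℝ) * (δ / 4 / n) ≤ n * (δ / 4 / n) := by
                apply mul_le_mul_of_nonneg_right hmod
                positivity
            _ = δ / 4 := by field_simp
        rw [dist_eq_norm]
        linarith
      -- second piece: from k' to m, congruent indices
      have hpiece2 : dist (u k') (u m) < δ / 2 := by
        have hlow' : 2 * L ≤ ‖u k' + u m‖ := hlow k' m hk'm hk'le
        have hsq : (2 * L) ^ 2 ≤ ‖u k' + u m‖ ^ 2 :=
          pow_le_pow_left₀ (by linarith) hlow' 2
        -- parallelogram law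
        have hpar : ‖u k' - u m‖ ^ 2 = 2 * b k' ^ 2 + 2 * b m ^ 2 - ‖u k' + u m‖ ^ 2 := by
          have h1 := norm_add_sq_real (u k') (u m)
          have h2 := norm_sub_sq_real (u k') (u m)
          simp only [hbdef]
          linarith
        have hbk' : b k' ^ 2 < L ^ 2 + (δ / 4) ^ 2 := by
          have := hN₂ k' (le_trans (le_max_right _ _) hk'N)
          rw [Real.dist_eq] at this
          have := abs_lt.mp this
          linarith [this.2]
        have hbm : b m ^ 2 < L ^ 2 + (δ / 4) ^ 2 := by
          have := hN₂ m (le_trans (le_max_right _ _) hm)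
          rw [Real.dist_eq] at this
          have := abs_lt.mp this
          linarith [this.2]
        have hfin : ‖u k' - u m‖ ^ 2 < (δ / 2) ^ 2 := by
          have : (2 * L) ^ 2 = 4 * L ^ 2 := by ring
          nlinarith
        have := lt_of_pow_lt_pow_left₀ 2 (by linarith : (0:ℝ) ≤ δ / 2) hfin
        rwa [dist_eq_norm]
      calc dist (u k) (u m) ≤ dist (u k) (u k') + dist (u k') (u m) := dist_triangle _ _ _
        _ < δ / 4 + δ / 2 := by linarith
        _ < δ := by linarith
    intro p hp q hq
    rcases le_total p q with hpq | hqp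
    · exact key p q hp hq hpq
    · rw [dist_comm]; exact key q p hq hp hqp
  exact cauchySeq_tendsto_of_complete hcauchy
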